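/- arXiv:2503.22189 — 2 statements merged into one kernel-verified Lean document; each statement's English description precedes it below -/
import Mathlib

section
/- Let (μ_n) and μ be σ-finite positive Borel measures on (0,∞) whose Laplace transforms h_{μ_n}(t) = ∫₀^∞ e^{-tx} dμ_n(x) and h_μ(t) = ∫₀^∞ e^{-tx} dμ(x) are finite for all t > 0, and suppose h_{μ_n}(t) → h_μ(t) as n → ∞ for every t > 0. Set h_{ν_n}(u) = ∫₀^∞ x e^{-ux} dμ_n(x) and h_ν(u) = ∫₀^∞ x e^{-ux} dμ(x). Then for every continuous g : ℝ → ℂ with compact support contained in (0,∞), ∫₀^∞ |∫₀^∞ h_{ν_n}(t+s) g(s) ds − ∫₀^∞ h_ν(t+s) g(s) ds|² dt → 0 as n → ∞. -/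
/-! Each `laplace m` is convex with derivative `-weightedLaplace m`, so `-weightedLaplace m u` is
a subgradient of `laplace m` at `u`. Subgradients of convex functions converging pointwise to a
function differentiable at `u` converge to its derivative, hence the kernels converge pointwise.
If `a > 0` lies below the support of `g`, then `weightedLaplace m (t + s)` is at most
`2 * laplace m (a / 2) / (t + a)` for `s ≥ a`, which bounds the Hankel images uniformly by the
square-integrable `C / (t + a)`; dominated convergence, once in `s` and once in `t`, concludes. -/

open MeasureTheory Set Filter Topology

noncomputable def laplace (m : Measure ℝ) (u : ℝ) : ℝ :=
  ∫ x in Ioi (0:ℝ), Real.exp (-u * x) ∂m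

noncomputable def weightedLaplace (m : Measure ℝ) (u : ℝ) : ℝ :=
  ∫ x in Ioi (0:ℝ), x * Real.exp (-u * x) ∂m

noncomputable def hankel (m : Measure ℝ) (g : ℝ → ℂ) (t : ℝ) : ℂ :=
  ∫ s in Ioi (0:ℝ), (weightedLaplace m (t + s) : ℂ) * g s

def HasFiniteLaplace (m : Measure ℝ) : Prop :=
  ∀ u : ℝ, 0 < u → ∫⁻ x in Ioi (0:ℝ), ENNReal.ofReal (Real.exp (-u * x)) ∂m < ⊤

theorem tendsto_subgradient_of_hasDerivAt {F : ℕ → ℝ → ℝ} {f : ℝ → ℝ} {D : ℕ → ℝ}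
    {u d : ℝ} (hF : ∀ᶠ v in 𝓝 u, Tendsto (fun n => F n v) atTop (𝓝 (f v)))
    (hf : HasDerivAt f d u) (hD : ∀ᶠ v in 𝓝 u, ∀ n, F n u + D n * (v - u) ≤ F n v) :
    Tendsto D atTop (𝓝 d) := by
  have hslope : ∀ v, Tendsto (fun n => F n v) atTop (𝓝 (f v)) →
      Tendsto (fun n => slope (F n) u v) atTop (𝓝 (slope f u v)) := fun v hv => by
    simpa only [slope_def_field] using (hv.sub hF.self_of_nhds).div_const (v - u)
  obtain ⟨hleft, hright⟩ := hasDerivAt_iff_tendsto_slope_left_right.1 hf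
  refine tendsto_order.2 ⟨fun b hb => ?_, fun b hb => ?_⟩
  · obtain ⟨v, hbv, hFv, hDv, hvu⟩ := ((hleft.eventually (lt_mem_nhds hb)).and
      ((hF.filter_mono nhdsWithin_le_nhds).and
        ((hD.filter_mono nhdsWithin_le_nhds).and self_mem_nhdsWithin))).exists
    filter_upwards [(hslope v hFv).eventually (lt_mem_nhds hbv)] with n hn
    refine hn.trans_le ?_
    rw [slope_def_field, div_le_iff_of_neg (sub_neg.2 hvu)]
    linarith [hDv n]
  · obtain ⟨v, hbv, hFv, hDv, huv⟩ := ((hright.eventually (gt_mem_nhds hb)).and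
      ((hF.filter_mono nhdsWithin_le_nhds).and
        ((hD.filter_mono nhdsWithin_le_nhds).and self_mem_nhdsWithin))).exists
    filter_upwards [(hslope v hFv).eventually (gt_mem_nhds hbv)] with n hn
    refine lt_of_le_of_lt ?_ hn
    rw [slope_def_field, le_div_iff₀ (sub_pos.2 huv)]
    linarith [hDv n]

theorem mul_exp_neg_mul_le {u : ℝ} (hu : 0 < u) (x : ℝ) :
    x * Real.exp (-u * x) ≤ 2 / u * Real.exp (-(u / 2) * x) := by
  have h : u / 2 * x ≤ Real.exp (u / 2 * x) := by linarith [Real.add_one_le_exp (u / 2 * x)]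
  calc x * Real.exp (-u * x) = 2 / u * (u / 2 * x) * Real.exp (-u * x) := by field_simp
    _ ≤ 2 / u * Real.exp (u / 2 * x) * Real.exp (-u * x) := by gcongr
    _ = 2 / u * Real.exp (-(u / 2) * x) := by rw [mul_assoc, ← Real.exp_add]; ring_nf

theorem mul_exp_neg_mul_le_sub (u v x : ℝ) :
    (u - v) * (x * Real.exp (-u * x)) ≤ Real.exp (-v * x) - Real.exp (-u * x) := by
  have h := Real.add_one_le_exp ((u - v) * x)
  have hexp : Real.exp (-v * x) = Real.exp ((u - v) * x) * Real.exp (-u * x) := by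
    rw [← Real.exp_add]; ring_nf
  rw [hexp]
  nlinarith [Real.exp_pos (-u * x)]

theorem IsCompact.exists_pos_subset_Ici {K : Set ℝ} (hK : IsCompact K) (hK0 : K ⊆ Ioi 0) :
    ∃ a, 0 < a ∧ K ⊆ Ici a := by
  rcases K.eq_empty_or_nonempty with rfl | hne
  · exact ⟨1, one_pos, empty_subset _⟩
  · obtain ⟨a, ha, hmin⟩ := hK.exists_isMinOn hne continuousOn_id
    exact ⟨a, hK0 ha, fun x hx => hmin hx⟩

section Laplace

variable {m : Measure ℝ}

theorem HasFiniteLaplace.integrableOn_exp (hm : HasFiniteLaplace m) {u : ℝ} (hu : 0 < u) :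
    IntegrableOn (fun x => Real.exp (-u * x)) (Ioi 0) m :=
  ⟨(by fun_prop : Continuous fun x : ℝ => Real.exp (-u * x)).aestronglyMeasurable,
    (hasFiniteIntegral_iff_ofReal (ae_of_all _ fun _ => (Real.exp_pos _).le)).2 (hm u hu)⟩

theorem HasFiniteLaplace.integrableOn_mul_exp (hm : HasFiniteLaplace m) {u : ℝ} (hu : 0 < u) :
    IntegrableOn (fun x => x * Real.exp (-u * x)) (Ioi 0) m := by
  refine ((hm.integrableOn_exp (half_pos hu)).const_mul (2 / u)).mono'
    (by fun_prop : Continuous fun x : ℝ => x * Real.exp (-u * x)).aestronglyMeasurable ?_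
  filter_upwards [ae_restrict_mem measurableSet_Ioi] with x (hx : 0 < x)
  rw [Real.norm_of_nonneg (by positivity)]
  exact mul_exp_neg_mul_le hu x

theorem laplace_nonneg (u : ℝ) : 0 ≤ laplace m u :=
  setIntegral_nonneg measurableSet_Ioi fun _ _ => (Real.exp_pos _).le

theorem weightedLaplace_nonneg (u : ℝ) : 0 ≤ weightedLaplace m u :=
  setIntegral_nonneg measurableSet_Ioi fun x (hx : 0 < x) => by positivity

theorem laplace_le_laplace (hm : HasFiniteLaplace m) {u v : ℝ} (hv : 0 < v) (hvu : v ≤ u) :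
    laplace m u ≤ laplace m v :=
  setIntegral_mono_on (hm.integrableOn_exp (hv.trans_le hvu)) (hm.integrableOn_exp hv)
    measurableSet_Ioi fun x (hx : 0 < x) => Real.exp_le_exp.2 (by nlinarith)

theorem weightedLaplace_le (hm : HasFiniteLaplace m) {u : ℝ} (hu : 0 < u) :
    weightedLaplace m u ≤ 2 / u * laplace m (u / 2) := by
  rw [laplace, ← integral_const_mul]
  exact setIntegral_mono_on (hm.integrableOn_mul_exp hu)
    ((hm.integrableOn_exp (half_pos hu)).const_mul _) measurableSet_Ioi
    fun x _ => mul_exp_neg_mul_le hu x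

theorem weightedLaplace_add_le (hm : HasFiniteLaplace m) {a s t : ℝ} (ha : 0 < a)
    (has : a ≤ s) (ht : 0 ≤ t) :
    weightedLaplace m (t + s) ≤ 2 * laplace m (a / 2) / (t + a) := by
  have hta : 0 < t + a := by linarith
  calc weightedLaplace m (t + s) ≤ 2 / (t + s) * laplace m ((t + s) / 2) :=
        weightedLaplace_le hm (by linarith)
    _ ≤ 2 / (t + a) * laplace m (a / 2) := by
        gcongr
        · exact laplace_nonneg _
        · exact laplace_le_laplace hm (half_pos ha) (by linarith)
    _ = 2 * laplace m (a / 2) / (t + a) := by ring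

theorem hasDerivAt_laplace (hm : HasFiniteLaplace m) {u : ℝ} (hu : 0 < u) :
    HasDerivAt (laplace m) (-weightedLaplace m u) u := by
  have hderiv : ∀ x v : ℝ,
      HasDerivAt (fun v => Real.exp (-v * x)) (-(x * Real.exp (-v * x))) v :=
    fun x v => by simpa [mul_comm] using ((hasDerivAt_neg v).mul_const x).exp
  have h := hasDerivAt_integral_of_dominated_loc_of_deriv_le (μ := m.restrict (Ioi 0))
    (F := fun v x => Real.exp (-v * x)) (Ioi_mem_nhds (half_lt_self hu))
    (Eventually.of_forall fun v =>
      (by fun_prop : Continuous fun x : ℝ => Real.exp (-v * x)).aestronglyMeasurable)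
    (hm.integrableOn_exp hu)
    ((by fun_prop : Continuous fun x : ℝ => -(x * Real.exp (-u * x))).aestronglyMeasurable)
    (bound := fun x => x * Real.exp (-(u / 2) * x)) ?_ (hm.integrableOn_mul_exp (half_pos hu))
    (ae_of_all _ fun x v _ => hderiv x v)
  · have h' := h.2
    rw [integral_neg] at h'
    exact h'
  · filter_upwards [ae_restrict_mem measurableSet_Ioi] with x (hx : 0 < x) v (hv : u / 2 < v)
    rw [norm_neg, Real.norm_of_nonneg (by positivity)]
    gcongr

theorem mul_weightedLaplace_le_sub (hm : HasFiniteLaplace m) {u v : ℝ} (hu : 0 < u)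
    (hv : 0 < v) :
    (u - v) * weightedLaplace m u ≤ laplace m v - laplace m u := by
  rw [weightedLaplace, laplace, laplace, ← integral_const_mul,
    ← integral_sub (hm.integrableOn_exp hv) (hm.integrableOn_exp hu)]
  exact setIntegral_mono_on ((hm.integrableOn_mul_exp hu).const_mul _)
    ((hm.integrableOn_exp hv).sub (hm.integrableOn_exp hu)) measurableSet_Ioi
    fun x _ => mul_exp_neg_mul_le_sub u v x

theorem stronglyMeasurable_weightedLaplace (m : Measure ℝ) [SFinite m] :
    StronglyMeasurable (weightedLaplace m) :=
  (by fun_prop : Continuous fun p : ℝ × ℝ => p.2 * Real.exp (-p.1 * p.2)).stronglyMeasurable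
    |>.integral_prod_right'

theorem stronglyMeasurable_hankel (m : Measure ℝ) [SFinite m] {g : ℝ → ℂ}
    (hg : Measurable g) :
    StronglyMeasurable (hankel m g) := by
  have h : Measurable fun p : ℝ × ℝ => (weightedLaplace m (p.1 + p.2) : ℂ) * g p.2 :=
    (Complex.measurable_ofReal.comp
      ((stronglyMeasurable_weightedLaplace m).measurable.comp measurable_add)).mul
      (hg.comp measurable_snd)
  exact h.stronglyMeasurable.integral_prod_right'

theorem norm_weightedLaplace_mul_le (hm : HasFiniteLaplace m) {g : ℝ → ℂ} {a S t : ℝ}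
    (ha : 0 < a) (hga : ∀ s, g s ≠ 0 → a ≤ s) (hS : laplace m (a / 2) ≤ S) (ht : 0 ≤ t)
    (s : ℝ) : ‖(weightedLaplace m (t + s) : ℂ) * g s‖ ≤ 2 * S / (t + a) * ‖g s‖ := by
  rcases eq_or_ne (g s) 0 with hs | hs
  · simp [hs]
  have hta : 0 < t + a := by linarith
  rw [norm_mul, Complex.norm_real, Real.norm_of_nonneg (weightedLaplace_nonneg _)]
  gcongr
  exact (weightedLaplace_add_le hm ha (hga s hs) ht).trans (by gcongr)

theorem norm_hankel_le (hm : HasFiniteLaplace m) {g : ℝ → ℂ} (hgi : IntegrableOn g (Ioi 0))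
    {a S t : ℝ} (ha : 0 < a) (hga : ∀ s, g s ≠ 0 → a ≤ s) (hS : laplace m (a / 2) ≤ S)
    (ht : 0 ≤ t) : ‖hankel m g t‖ ≤ 2 * S / (t + a) * ∫ s in Ioi 0, ‖g s‖ := by
  rw [← integral_const_mul]
  exact norm_integral_le_of_norm_le (hgi.norm.const_mul _)
    (ae_of_all _ (norm_weightedLaplace_mul_le hm ha hga hS ht))

end Laplace

section Convergence

variable {μs : ℕ → Measure ℝ} {μ : Measure ℝ}

theorem tendsto_weightedLaplace (hμs : ∀ n, HasFiniteLaplace (μs n)) (hμ : HasFiniteLaplace μ)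
    (hconv : ∀ u, 0 < u → Tendsto (fun n => laplace (μs n) u) atTop (𝓝 (laplace μ u)))
    {u : ℝ} (hu : 0 < u) :
    Tendsto (fun n => weightedLaplace (μs n) u) atTop (𝓝 (weightedLaplace μ u)) := by
  have h := tendsto_subgradient_of_hasDerivAt (D := fun n => -weightedLaplace (μs n) u)
    (eventually_of_mem (Ioi_mem_nhds hu) hconv) (hasDerivAt_laplace hμ hu)
    (eventually_of_mem (Ioi_mem_nhds hu) fun v hv n => by
      linarith [mul_weightedLaplace_le_sub (hμs n) hu hv])
  simpa using h.neg

theorem tendsto_hankel [∀ n, SFinite (μs n)] (hμs : ∀ n, HasFiniteLaplace (μs n))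
    (hμ : HasFiniteLaplace μ)
    (hconv : ∀ u, 0 < u → Tendsto (fun n => laplace (μs n) u) atTop (𝓝 (laplace μ u)))
    {g : ℝ → ℂ} (hgi : IntegrableOn g (Ioi 0)) {a S t : ℝ} (ha : 0 < a)
    (hga : ∀ s, g s ≠ 0 → a ≤ s) (hS : ∀ n, laplace (μs n) (a / 2) ≤ S) (ht : 0 ≤ t) :
    Tendsto (fun n => hankel (μs n) g t) atTop (𝓝 (hankel μ g t)) := by
  refine tendsto_integral_of_dominated_convergence (fun s => 2 * S / (t + a) * ‖g s‖)
    (fun n => ?_) (hgi.norm.const_mul _)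
    (fun n => ae_of_all _ (norm_weightedLaplace_mul_le (hμs n) ha hga (hS n) ht)) ?_
  · have hk : Measurable fun s => (weightedLaplace (μs n) (t + s) : ℂ) :=
      Complex.measurable_ofReal.comp
        ((stronglyMeasurable_weightedLaplace _).measurable.comp (measurable_const_add t))
    exact hk.aestronglyMeasurable.mul hgi.aestronglyMeasurable
  · filter_upwards [ae_restrict_mem measurableSet_Ioi] with s (hs : 0 < s)
    exact ((Complex.continuous_ofReal.tendsto _).comp
      (tendsto_weightedLaplace hμs hμ hconv (by linarith))).mul_const (g s)

end Convergence

theorem tendsto_setIntegral_norm_sub_sq {E : Type*} [NormedAddCommGroup E] {F : ℕ → ℝ → E}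
    {f : ℝ → E} (hF : ∀ n, AEStronglyMeasurable (F n) (volume.restrict (Ioi 0)))
    (hf : AEStronglyMeasurable f (volume.restrict (Ioi 0))) {a C : ℝ} (ha : 0 < a)
    (hbound : ∀ n, ∀ t, 0 < t → ‖F n t - f t‖ ≤ C / (t + a))
    (hlim : ∀ t, 0 < t → Tendsto (fun n => F n t) atTop (𝓝 (f t))) :
    Tendsto (fun n => ∫ t in Ioi 0, ‖F n t - f t‖ ^ 2) atTop (𝓝 0) := by
  have hint : IntegrableOn (fun t : ℝ => (C / (t + a)) ^ 2) (Ioi 0) := by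
    refine IntegrableOn.congr_fun
      ((integrableOn_add_rpow_Ioi_of_lt (by norm_num : (-2 : ℝ) < -1) (neg_lt_zero.2 ha)).const_mul
        (C ^ 2)) (fun t (ht : 0 < t) => ?_) measurableSet_Ioi
    rw [Real.rpow_neg (by linarith), div_pow, div_eq_mul_inv, Real.rpow_two]
  have h := tendsto_integral_of_dominated_convergence
    (F := fun n t => ‖F n t - f t‖ ^ 2) (f := fun _ => 0)
    (fun t => (C / (t + a)) ^ 2) (fun n => ((hF n).sub hf).norm.pow 2) hint (fun n => ?_) ?_
  · rwa [integral_zero] at h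
  · filter_upwards [ae_restrict_mem measurableSet_Ioi] with t (ht : 0 < t)
    rw [norm_pow, norm_norm]
    exact pow_le_pow_left₀ (norm_nonneg _) (hbound n t ht) 2
  · filter_upwards [ae_restrict_mem measurableSet_Ioi] with t (ht : 0 < t)
    simpa using ((hlim t ht).sub_const (f t)).norm.pow 2

/-- if the Laplace transforms `h_{μₙ}` converge pointwise to `h_μ` on `(0,∞)`,
then for every continuous `g` compactly supported in `(0,∞)` the Hankel images
`Γ_{νₙ} g` converge to `Γ_ν g` in `L²(0,∞)`, where `dνₙ = x dμₙ`, `dν = x dμ`. -/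
theorem hankel_strong_convergence (μseq : ℕ → Measure ℝ) (μ : Measure ℝ)
    [∀ n, SigmaFinite (μseq n)] [SigmaFinite μ]
    (hfin : ∀ n, ∀ t : ℝ, 0 < t →
      ∫⁻ x in Ioi (0:ℝ), ENNReal.ofReal (Real.exp (-t * x)) ∂(μseq n) < ⊤)
    (hfin' : ∀ t : ℝ, 0 < t →
      ∫⁻ x in Ioi (0:ℝ), ENNReal.ofReal (Real.exp (-t * x)) ∂μ < ⊤)
    (hconv : ∀ t : ℝ, 0 < t →
      Tendsto (fun n => ∫ x in Ioi (0:ℝ), Real.exp (-t * x) ∂(μseq n)) atTop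
        (nhds (∫ x in Ioi (0:ℝ), Real.exp (-t * x) ∂μ)))
    (g : ℝ → ℂ) (hg : Continuous g) (hgc : HasCompactSupport g)
    (hgs : tsupport g ⊆ Ioi (0:ℝ)) :
    Tendsto (fun n => ∫ t in Ioi (0:ℝ),
        ‖(∫ s in Ioi (0:ℝ),
            ((∫ x in Ioi (0:ℝ), x * Real.exp (-(t + s) * x) ∂(μseq n) : ℝ) : ℂ) * g s)
          - ∫ s in Ioi (0:ℝ),
              ((∫ x in Ioi (0:ℝ), x * Real.exp (-(t + s) * x) ∂μ : ℝ) : ℂ) * g s‖ ^ 2)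
      atTop (nhds 0) := by
  obtain ⟨a, ha, hKa⟩ := hgc.isCompact.exists_pos_subset_Ici hgs
  have hga : ∀ s, g s ≠ 0 → a ≤ s := fun s hs => hKa (subset_tsupport g hs)
  have hgi : IntegrableOn g (Ioi 0) := (hg.integrable_of_hasCompactSupport hgc).integrableOn
  obtain ⟨S, hS⟩ := (hconv _ (half_pos ha)).bddAbove_range
  have hSn : ∀ n, laplace (μseq n) (a / 2) ≤ S := fun n => hS ⟨n, rfl⟩
  have hSμ : laplace μ (a / 2) ≤ S := le_of_tendsto' (hconv _ (half_pos ha)) hSn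
  set I := ∫ s in Ioi 0, ‖g s‖
  refine tendsto_setIntegral_norm_sub_sq
    (fun n => (stronglyMeasurable_hankel _ hg.measurable).aestronglyMeasurable)
    (stronglyMeasurable_hankel _ hg.measurable).aestronglyMeasurable ha (C := 4 * S * I)
    (fun n t ht => (norm_sub_le _ _).trans ?_)
    (fun t ht => tendsto_hankel hfin hfin' hconv hgi ha hga hSn ht.le)
  show ‖hankel (μseq n) g t‖ + ‖hankel μ g t‖ ≤ 4 * S * I / (t + a)
  refine (add_le_add (norm_hankel_le (hfin n) hgi ha hga (hSn n) ht.le)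
    (norm_hankel_le hfin' hgi ha hga hSμ ht.le)).trans_eq ?_
  ring
end

section
/- Define h : (0,∞) → ℝ by h(t) = (1/π) ∫₀^1 e^{-πtλ} arcosh(1/λ) dλ, where arcosh is the inverse hyperbolic cosine. Then h(t) = (1/π²)·(log t)/t·(1 + o(1)) as t → ∞; equivalently, π² t h(t)/log t → 1 as t → ∞. In particular, the estimate h(t) ≤ C/t fails as t → ∞ for every constant C. -/
open MeasureTheory Set Filter
open scoped Real

/-- The inverse hyperbolic cosine, `arcosh x = log (x + √(x² - 1))`. -/
noncomputable def arcosh (x : ℝ) : ℝ := Real.log (x + Real.sqrt (x ^ 2 - 1))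

/-- The kernel function `h(t) = (1/π) ∫₀¹ e^{-πtλ} arcosh(1/λ) dλ` of the Hankel operator
whose spectral measure is `e^{-2λ} dλ`. -/
noncomputable def mehlerDualKernel (t : ℝ) : ℝ :=
  (1 / π) * ∫ l in Ioc (0:ℝ) 1, Real.exp (-(π * t * l)) * arcosh (1 / l)

/-!
Write `K(s) = ∫₀¹ e^{-sλ} arcosh(1/λ) dλ`, so that `h(t) = K(πt)/π`. On `(0,1]` one has
`-log λ ≤ arcosh(1/λ) ≤ log 2 - log λ`. For the upper bound split `-log λ = log s - log(sλ)`
and use `-log x ≤ 2 x^{-1/2}` together with `∫₀^∞ λ^{-1/2} e^{-sλ} dλ = Γ(1/2) s^{-1/2}`, which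
gives `s K(s) ≤ log(2s) + 2√π`. For the lower bound keep only `λ ≤ log s / s`, where
`-log λ ≥ log s - log log s`; this gives `s K(s) ≥ (log s - log log s)(1 - 1/s)`. Hence
`s K(s) ~ log s`, and a bound `h(t) ≤ C/t` would force `π² t h(t)/log t → 0`.
-/

open Real hiding arcosh
open scoped Topology

@[fun_prop]
lemma measurable_arcosh : Measurable arcosh := by
  unfold arcosh; fun_prop

lemma neg_log_le_arcosh_inv {l : ℝ} (hl : 0 < l) : -log l ≤ arcosh (1 / l) := by
  rw [arcosh, ← log_inv, ← one_div]
  exact log_le_log (by positivity) (le_add_of_nonneg_right (sqrt_nonneg _))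

lemma arcosh_inv_le {l : ℝ} (hl : 0 < l) : arcosh (1 / l) ≤ log 2 - log l := by
  have hsqrt : √((1 / l) ^ 2 - 1) ≤ 1 / l :=
    (sqrt_le_sqrt (by linarith)).trans_eq (sqrt_sq (by positivity))
  calc arcosh (1 / l) ≤ log (2 * (1 / l)) := log_le_log (by positivity) (by linarith)
    _ = log 2 - log l := by rw [log_mul two_ne_zero (by positivity), one_div, log_inv]; ring

lemma arcosh_inv_nonneg {l : ℝ} (hl0 : 0 < l) (hl1 : l ≤ 1) : 0 ≤ arcosh (1 / l) :=
  (neg_nonneg.2 (log_nonpos hl0.le hl1)).trans (neg_log_le_arcosh_inv hl0)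

lemma neg_log_le_two_mul_rpow {x : ℝ} (hx : 0 < x) : -log x ≤ 2 * x ^ (-(1 / 2) : ℝ) := by
  have := log_le_rpow_div (inv_pos.2 hx).le (by norm_num : (0:ℝ) < 1 / 2)
  rw [log_inv, inv_rpow hx.le, ← rpow_neg hx.le] at this
  linarith

lemma integral_exp_neg_mul_Ioc {s c : ℝ} (hs : s ≠ 0) (hc : 0 ≤ c) :
    ∫ l in Ioc 0 c, exp (-(s * l)) = (1 - exp (-(s * c))) / s := by
  have := intervalIntegral.integral_comp_mul_left exp (a := 0) (b := c) (neg_ne_zero.2 hs)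
  simp only [neg_mul, mul_zero, integral_exp, exp_zero, smul_eq_mul] at this
  rw [← intervalIntegral.integral_of_le hc, this]
  field_simp
  ring

lemma integrableOn_rpow_neg_half_mul_exp {s : ℝ} (hs : 0 < s) :
    IntegrableOn (fun l : ℝ => l ^ (-(1 / 2) : ℝ) * exp (-(s * l))) (Ioi 0) := by
  refine (integrableOn_rpow_mul_exp_neg_mul_rpow (s := -(1 / 2)) (by norm_num) one_pos hs
    ).congr_fun (fun l _ => ?_) measurableSet_Ioi
  simp only [rpow_one, neg_mul]

lemma setIntegral_rpow_neg_half_mul_exp_le {s : ℝ} (hs : 0 < s) :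
    ∫ l in Ioc 0 1, l ^ (-(1 / 2) : ℝ) * exp (-(s * l)) ≤ √π * s ^ (-(1 / 2) : ℝ) := by
  have hgamma := integral_rpow_mul_exp_neg_mul_Ioi (a := 1 / 2) one_half_pos hs
  rw [Gamma_one_half_eq, one_div s, inv_rpow hs.le, ← rpow_neg hs.le] at hgamma
  norm_num at hgamma
  calc ∫ l in Ioc 0 1, l ^ (-(1 / 2) : ℝ) * exp (-(s * l))
      ≤ ∫ l in Ioi 0, l ^ (-(1 / 2) : ℝ) * exp (-(s * l)) :=
        setIntegral_mono_set (integrableOn_rpow_neg_half_mul_exp hs)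
          ((ae_restrict_iff' measurableSet_Ioi).2 (ae_of_all _ fun l hl =>
            mul_nonneg (rpow_nonneg (le_of_lt hl) _) (exp_pos _).le))
          Ioc_subset_Ioi_self.eventuallyLE
    _ = √π * s ^ (-(1 / 2) : ℝ) := by norm_num [hgamma, mul_comm]

noncomputable def arcoshLaplace (s : ℝ) : ℝ :=
  ∫ l in Ioc (0:ℝ) 1, exp (-(s * l)) * arcosh (1 / l)

lemma mehlerDualKernel_eq_arcoshLaplace (t : ℝ) :
    mehlerDualKernel t = arcoshLaplace (π * t) / π := by
  rw [mehlerDualKernel, arcoshLaplace, one_div_mul_eq_div]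

lemma integrableOn_exp_mul_arcosh_inv {s : ℝ} (hs : 0 ≤ s) :
    IntegrableOn (fun l => exp (-(s * l)) * arcosh (1 / l)) (Ioc 0 1) := by
  refine Integrable.mono' (g := fun l => log 2 - log l) ((integrable_const _).sub ?_)
    (by fun_prop : Measurable fun l => exp (-(s * l)) * arcosh (1 / l)).aestronglyMeasurable ?_
  · exact (intervalIntegrable_iff_integrableOn_Ioc_of_le zero_le_one).1
      intervalIntegral.intervalIntegrable_log'
  · refine (ae_restrict_iff' measurableSet_Ioc).2 (ae_of_all _ fun l ⟨hl0, hl1⟩ => ?_)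
    have hexp : exp (-(s * l)) ≤ 1 := exp_le_one_iff.2 (by nlinarith)
    have harcosh := arcosh_inv_nonneg hl0 hl1
    rw [norm_mul, Real.norm_of_nonneg (exp_pos _).le, Real.norm_of_nonneg harcosh]
    nlinarith [arcosh_inv_le hl0, exp_pos (-(s * l))]

lemma mul_arcoshLaplace_le {s : ℝ} (hs : 1 ≤ 2 * s) :
    s * arcoshLaplace s ≤ log (2 * s) + 2 * √π := by
  have hs0 : 0 < s := by linarith
  have hlog : 0 ≤ log (2 * s) := log_nonneg hs
  set c : ℝ := s ^ (-(1 / 2) : ℝ)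
  have hpoint : ∀ l ∈ Ioc (0:ℝ) 1, exp (-(s * l)) * arcosh (1 / l)
      ≤ log (2 * s) * exp (-(s * l)) + 2 * c * (l ^ (-(1 / 2) : ℝ) * exp (-(s * l))) := by
    intro l ⟨hl0, _⟩
    have hsplit : log 2 - log l = log (2 * s) - log (s * l) := by
      rw [log_mul two_ne_zero hs0.ne', log_mul hs0.ne' hl0.ne']; ring
    have hsl := neg_log_le_two_mul_rpow (mul_pos hs0 hl0)
    rw [mul_rpow hs0.le hl0.le] at hsl
    nlinarith [arcosh_inv_le hl0, exp_pos (-(s * l))]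
  have hexp : IntegrableOn (fun l => exp (-(s * l))) (Ioc 0 1) :=
    (continuous_exp.comp (by fun_prop)).integrableOn_Ioc
  have hrpow : IntegrableOn (fun l : ℝ => l ^ (-(1 / 2) : ℝ) * exp (-(s * l))) (Ioc 0 1) :=
    (integrableOn_rpow_neg_half_mul_exp hs0).mono_set Ioc_subset_Ioi_self
  have hK : arcoshLaplace s ≤ log (2 * s) * ((1 - exp (-(s * 1))) / s) + 2 * c * (√π * c) :=
    calc arcoshLaplace s
        ≤ ∫ l in Ioc 0 1, (log (2 * s) * exp (-(s * l))
            + 2 * c * (l ^ (-(1 / 2) : ℝ) * exp (-(s * l)))) :=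
          setIntegral_mono_on (integrableOn_exp_mul_arcosh_inv hs0.le)
            ((hexp.const_mul _).add (hrpow.const_mul _)) measurableSet_Ioc hpoint
      _ = log (2 * s) * (∫ l in Ioc 0 1, exp (-(s * l)))
            + 2 * c * ∫ l in Ioc 0 1, l ^ (-(1 / 2) : ℝ) * exp (-(s * l)) := by
          rw [integral_add (hexp.const_mul _) (hrpow.const_mul _), integral_const_mul,
            integral_const_mul]
      _ ≤ _ := by
          rw [integral_exp_neg_mul_Ioc hs0.ne' zero_le_one]
          gcongr
          exact setIntegral_rpow_neg_half_mul_exp_le hs0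
  have hc : c * c = s⁻¹ := by
    rw [← rpow_add hs0]; norm_num [rpow_neg_one]
  calc s * arcoshLaplace s
      ≤ s * (log (2 * s) * ((1 - exp (-(s * 1))) / s) + 2 * c * (√π * c)) := by gcongr
    _ = log (2 * s) * (1 - exp (-s)) + 2 * √π := by
        rw [mul_comm √π c, ← mul_assoc, mul_assoc 2, hc]; field_simp
    _ ≤ log (2 * s) + 2 * √π := by nlinarith [exp_pos (-s)]

lemma neg_log_mul_le_mul_arcoshLaplace {s d : ℝ} (hs : 0 < s) (hd0 : 0 < d) (hd1 : d ≤ 1) :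
    -log d * (1 - exp (-(s * d))) ≤ s * arcoshLaplace s := by
  have hint := integrableOn_exp_mul_arcosh_inv hs.le
  have hnear : ∫ l in Ioc 0 d, -log d * exp (-(s * l))
      ≤ ∫ l in Ioc 0 d, exp (-(s * l)) * arcosh (1 / l) := by
    refine setIntegral_mono_on ((continuous_exp.comp (by fun_prop)).integrableOn_Ioc.const_mul _)
      (hint.mono_set (Ioc_subset_Ioc_right hd1)) measurableSet_Ioc fun l ⟨hl0, hld⟩ => ?_
    have hlog : -log d ≤ -log l := neg_le_neg (log_le_log hl0 hld)
    nlinarith [neg_log_le_arcosh_inv hl0, exp_pos (-(s * l))]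
  have hfar : ∫ l in Ioc 0 d, exp (-(s * l)) * arcosh (1 / l) ≤ arcoshLaplace s :=
    setIntegral_mono_set hint
      ((ae_restrict_iff' measurableSet_Ioc).2 (ae_of_all _ fun l ⟨hl0, hl1⟩ =>
        mul_nonneg (exp_pos _).le (arcosh_inv_nonneg hl0 hl1)))
      (Ioc_subset_Ioc_right hd1).eventuallyLE
  rw [integral_const_mul, integral_exp_neg_mul_Ioc hs.ne' hd0.le] at hnear
  rw [← mul_div_assoc, div_le_iff₀ hs] at hnear
  linarith [hnear.trans (mul_le_mul_of_nonneg_right hfar hs.le)]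

lemma tendsto_mul_arcoshLaplace_div_log :
    Tendsto (fun s => s * arcoshLaplace s / log s) atTop (𝓝 1) := by
  have hloglog : Tendsto (fun s => log (log s) / log s) atTop (𝓝 0) :=
    isLittleO_log_id_atTop.tendsto_div_nhds_zero.comp tendsto_log_atTop
  have hlower : Tendsto (fun s => (1 - log (log s) / log s) * (1 - s⁻¹)) atTop (𝓝 1) := by
    simpa using ((tendsto_const_nhds (x := (1:ℝ))).sub hloglog).mul
      ((tendsto_const_nhds (x := (1:ℝ))).sub tendsto_inv_atTop_zero)
  have hupper : Tendsto (fun s => 1 + (log 2 + 2 * √π) / log s) atTop (𝓝 1) := by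
    simpa using tendsto_const_nhds.add (tendsto_const_nhds.div_atTop tendsto_log_atTop)
  refine tendsto_of_tendsto_of_tendsto_of_le_of_le' hlower hupper ?_ ?_
  all_goals filter_upwards [eventually_gt_atTop 1] with s hs
  all_goals have hs0 : 0 < s := by linarith
  all_goals have hlog := log_pos hs
  · have hd1 : log s / s ≤ 1 := (div_le_one hs0).2 (log_le_self hs0.le)
    have hbound := neg_log_mul_le_mul_arcoshLaplace hs0 (by positivity) hd1
    rw [log_div hlog.ne' hs0.ne', mul_div_cancel₀ _ hs0.ne', exp_neg, exp_log hs0] at hbound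
    rw [le_div_iff₀ hlog]
    calc (1 - log (log s) / log s) * (1 - s⁻¹) * log s
        = -(log (log s) - log s) * (1 - s⁻¹) := by field_simp; ring
      _ ≤ s * arcoshLaplace s := hbound
  · rw [div_le_iff₀ hlog]
    calc s * arcoshLaplace s ≤ log (2 * s) + 2 * √π := mul_arcoshLaplace_le (by linarith)
      _ = (1 + (log 2 + 2 * √π) / log s) * log s := by
        rw [log_mul two_ne_zero hs0.ne']; field_simp; ring

lemma tendsto_log_const_mul_div_log {c : ℝ} (hc : 0 < c) :
    Tendsto (fun t => log (c * t) / log t) atTop (𝓝 1) := by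
  have hlim : Tendsto (fun t => log c / log t + 1) atTop (𝓝 1) := by
    simpa using (tendsto_const_nhds.div_atTop tendsto_log_atTop).add_const 1
  refine hlim.congr' ?_
  filter_upwards [eventually_gt_atTop 1] with t ht
  rw [log_mul hc.ne' (by linarith), add_div, div_self (log_pos ht).ne', add_comm]

/-- `h(t) = (1/π²) (log t)/t (1 + o(1))` as `t → ∞`, i.e.
`π² t h(t)/log t → 1`; in particular the estimate `h(t) ≤ C/t` fails at infinity for
every constant `C`. -/
theorem mehlerDualKernel_asymptotics :
    Tendsto (fun t => π ^ 2 * t * mehlerDualKernel t / Real.log t) atTop (nhds 1)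
    ∧ ∀ C : ℝ, ¬ (∀ᶠ t in atTop, mehlerDualKernel t ≤ C / t) := by
  have hlim : Tendsto (fun t => π ^ 2 * t * mehlerDualKernel t / log t) atTop (𝓝 1) := by
    have hprod := (tendsto_mul_arcoshLaplace_div_log.comp
      (tendsto_id.const_mul_atTop pi_pos)).mul (tendsto_log_const_mul_div_log pi_pos)
    rw [one_mul] at hprod
    refine hprod.congr' ?_
    filter_upwards [eventually_gt_atTop 1] with t ht
    have hlog : log (π * t) ≠ 0 := (log_pos (by nlinarith [pi_gt_three])).ne'
    simp only [Function.comp_apply, id, mehlerDualKernel_eq_arcoshLaplace]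
    field_simp
  refine ⟨hlim, fun C hC => ?_⟩
  have hbound : ∀ᶠ t in atTop, π ^ 2 * t * mehlerDualKernel t / log t ≤ π ^ 2 * C / log t := by
    filter_upwards [hC, eventually_gt_atTop 1] with t hCt ht
    rw [div_le_div_iff_of_pos_right (log_pos ht)]
    calc π ^ 2 * t * mehlerDualKernel t ≤ π ^ 2 * t * (C / t) := by gcongr
      _ = π ^ 2 * C := by field_simp
  have hcontra := le_of_tendsto_of_tendsto hlim
    (tendsto_const_nhds.div_atTop tendsto_log_atTop) hbound
  norm_num at hcontra
end
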